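/- Let α ∈ (0,1) be irrational, and let n ≥ 1 with k_0(n) ≥ L where L ≥ 2 (or L ≥ 1 if α < 1/2). Let ∥·∥* be the one-sided distance with ∥nα∥* < 1/2. Then ∥nα∥* = min{ ∥xα∥* : n ≤ x < n + q_{L−1} + q_L }. Moreover, if the Ostrowski digit b_L(n) ≤ a_{L+1} − 1, then ∥nα∥* = min{ ∥xα∥* : n ≤ x < n + q_{L−1} + 2q_L }. -/

import Mathlib

/-- Gauss-map iterates of `α`. -/
noncomputable def cfFrac (α : ℝ) : ℕ → ℝ
  | 0 => α
  | k + 1 => Int.fract (1 / cfFrac α k)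

/-- Partial quotients of `α` (1-indexed, `cfA α 0 = 0` unused). -/
noncomputable def cfA (α : ℝ) : ℕ → ℕ
  | 0 => 0
  | k + 1 => (⌊1 / cfFrac α k⌋).toNat

/-- Numerators of the convergents of `α`. -/
noncomputable def cfP (α : ℝ) : ℕ → ℕ
  | 0 => 0
  | 1 => 1
  | k + 2 => cfA α (k + 2) * cfP α (k + 1) + cfP α k

/-- Denominators of the convergents of `α`. -/
noncomputable def cfQ (α : ℝ) : ℕ → ℕ
  | 0 => 1
  | 1 => cfA α 1
  | k + 2 => cfA α (k + 2) * cfQ α (k + 1) + cfQ α k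

/-- Distance from `x` to the nearest integer. -/
noncomputable def distNearInt (x : ℝ) : ℝ := min (Int.fract x) (1 - Int.fract x)

/-- `b` is the sequence of digits of an Ostrowski representation of `n` w.r.t. `α`:
`n = Σ b_k q_k` with `0 ≤ b_0 ≤ a_1 - 1`, `0 ≤ b_k ≤ a_{k+1}` for `k ≥ 1`, and
`b_{k-1} = 0` whenever `b_k = a_{k+1}`. -/
def OstrowskiRep (α : ℝ) (n : ℕ) (b : ℕ → ℕ) : Prop :=
  b 0 ≤ cfA α 1 - 1 ∧
  (∀ k, 1 ≤ k → b k ≤ cfA α (k + 1)) ∧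
  (∀ k, 1 ≤ k → b k = cfA α (k + 1) → b (k - 1) = 0) ∧
  ∃ N, (∀ k, N < k → b k = 0) ∧ n = ∑ k ∈ Finset.range (N + 1), b k * cfQ α k


/-!
Write `n α = P + T` with `P ∈ ℤ` and `T = Σ_{k ≥ k₀} b_k (q_k α - p_k)`. Since
`q_k α - p_k = (-1)^k δ_{k+1}` with `δ_k = a_{k+1} δ_{k+1} + δ_{k+2}`, the digit bounds give
`0 < (-1)^{k₀} T < δ_{k₀} ≤ δ_L < 1/2`, so `‖n α‖* = |T|` and `T` lies on the side of `0` that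
`‖·‖*` measures. If `x = n + m` had `‖x α‖* < |T|`, some `m α - p` would satisfy
`|m α - p| ≤ |T|` and lie on the other side. For `m < q_{L-1} + c q_L` and
`|m α - p| < δ_L - (c - 1) δ_{L+1}` the only such approximations are the multiples of
`q_L α - p_L`, which lie on the side of `T` when `k₀ = L` and exceed `|T|` otherwise. This gives
the first claim with `c = 1`, and the second with `c = 2` when `a_{L+1} ≥ 2`, because then
`b_L < a_{L+1}` yields `|T| < δ_L - δ_{L+1}`.
-/

section ContinuedFraction

variable {α : ℝ}

lemma cfFrac_mem (hα : α ∈ Set.Ioo (0:ℝ) 1) (hirr : Irrational α) (k : ℕ) :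
    Irrational (cfFrac α k) ∧ cfFrac α k ∈ Set.Ioo 0 1 := by
  induction k with
  | zero => exact ⟨hirr, hα⟩
  | succ k ih =>
    have hk : cfFrac α (k + 1) = Int.fract (1 / cfFrac α k) := rfl
    have hfract : Irrational (cfFrac α (k + 1)) := by
      rw [hk, Int.fract, one_div]
      exact ih.1.inv.sub_intCast _
    rw [hk] at hfract ⊢
    refine ⟨hfract, (Int.fract_nonneg _).lt_of_ne ?_, Int.fract_lt_one _⟩
    exact fun h => hfract.ne_int 0 (by simpa using h.symm)

lemma cfA_succ_eq_floor (hα : α ∈ Set.Ioo (0:ℝ) 1) (hirr : Irrational α) (k : ℕ) :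
    (cfA α (k + 1) : ℤ) = ⌊1 / cfFrac α k⌋ :=
  Int.toNat_of_nonneg <| Int.floor_nonneg.mpr <|
    zero_le_one.trans (one_lt_one_div (cfFrac_mem hα hirr k).2.1 (cfFrac_mem hα hirr k).2.2).le

lemma one_le_cfA_succ (hα : α ∈ Set.Ioo (0:ℝ) 1) (hirr : Irrational α) (k : ℕ) :
    1 ≤ cfA α (k + 1) := by
  have h : (1:ℤ) ≤ ⌊1 / cfFrac α k⌋ := Int.le_floor.mpr <| by
    exact_mod_cast (one_lt_one_div (cfFrac_mem hα hirr k).2.1 (cfFrac_mem hα hirr k).2.2).le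
  have := cfA_succ_eq_floor hα hirr k
  omega

lemma cfFrac_mul_cfA_add_cfFrac (hα : α ∈ Set.Ioo (0:ℝ) 1) (hirr : Irrational α) (k : ℕ) :
    cfFrac α k * (cfA α (k + 1) + cfFrac α (k + 1)) = 1 := by
  have hfloor : ((cfA α (k + 1) : ℤ) : ℝ) = ⌊1 / cfFrac α k⌋ := by
    rw [cfA_succ_eq_floor hα hirr k]
  have h0 := (cfFrac_mem hα hirr k).2.1.ne'
  rw [show cfFrac α (k + 1) = Int.fract (1 / cfFrac α k) from rfl, Int.fract, ← hfloor]
  push_cast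
  field_simp
  ring

lemma cfP_mul_cfQ_sub (k : ℕ) :
    (cfP α (k + 1) : ℤ) * cfQ α k - cfP α k * cfQ α (k + 1) = (-1) ^ k := by
  induction k with
  | zero => simp [cfP, cfQ]
  | succ k ih =>
    simp only [cfP, cfQ]
    push_cast
    linear_combination (-1 : ℤ) * ih

lemma cfQ_pos (hα : α ∈ Set.Ioo (0:ℝ) 1) (hirr : Irrational α) (k : ℕ) : 0 < cfQ α k := by
  induction k using Nat.twoStepInduction with
  | zero => simp [cfQ]
  | one => exact one_le_cfA_succ hα hirr 0
  | more k _ ih => simp only [cfQ]; positivity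

/-- `cfDelta α k = |q_{k-1} α - p_{k-1}|`, see `cfQ_mul_sub_cfP`. -/
noncomputable def cfDelta (α : ℝ) (k : ℕ) : ℝ := ∏ i ∈ Finset.range k, cfFrac α i

lemma cfDelta_zero : cfDelta α 0 = 1 := Finset.prod_range_zero _

lemma cfDelta_one : cfDelta α 1 = α := by simp [cfDelta, cfFrac]

lemma cfDelta_succ (k : ℕ) : cfDelta α (k + 1) = cfDelta α k * cfFrac α k :=
  Finset.prod_range_succ _ _

lemma cfDelta_pos (hα : α ∈ Set.Ioo (0:ℝ) 1) (hirr : Irrational α) (k : ℕ) : 0 < cfDelta α k :=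
  Finset.prod_pos fun i _ => (cfFrac_mem hα hirr i).2.1

lemma cfDelta_strictAnti (hα : α ∈ Set.Ioo (0:ℝ) 1) (hirr : Irrational α) :
    StrictAnti (cfDelta α) :=
  strictAnti_nat_of_succ_lt fun k => by
    rw [cfDelta_succ]
    exact mul_lt_of_lt_one_right (cfDelta_pos hα hirr k) (cfFrac_mem hα hirr k).2.2

lemma cfDelta_eq_cfA_mul_add (hα : α ∈ Set.Ioo (0:ℝ) 1) (hirr : Irrational α) (k : ℕ) :
    cfDelta α k = cfA α (k + 1) * cfDelta α (k + 1) + cfDelta α (k + 2) := by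
  rw [cfDelta_succ (k + 1), cfDelta_succ k]
  linear_combination (-cfDelta α k) * cfFrac_mul_cfA_add_cfFrac hα hirr k

lemma cfDelta_two_lt_half (hα : α ∈ Set.Ioo (0:ℝ) 1) (hirr : Irrational α) :
    cfDelta α 2 < 1 / 2 := by
  have h := cfDelta_eq_cfA_mul_add hα hirr 0
  have ha : (1:ℝ) ≤ cfA α 1 := by exact_mod_cast one_le_cfA_succ hα hirr 0
  have h21 : cfDelta α 2 < cfDelta α 1 := cfDelta_strictAnti hα hirr one_lt_two
  rw [cfDelta_zero] at h
  nlinarith [cfDelta_pos hα hirr 1]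

lemma cast_mul_cfDelta_add_le (hα : α ∈ Set.Ioo (0:ℝ) 1) (hirr : Irrational α) {d k : ℕ}
    (hd : d ≤ cfA α (k + 1)) : d * cfDelta α (k + 1) + cfDelta α (k + 2) ≤ cfDelta α k := by
  have hdR : (d:ℝ) ≤ cfA α (k + 1) := by exact_mod_cast hd
  nlinarith [cfDelta_eq_cfA_mul_add hα hirr k, cfDelta_pos hα hirr (k + 1)]

lemma cfQ_mul_sub_cfP (hα : α ∈ Set.Ioo (0:ℝ) 1) (hirr : Irrational α) (k : ℕ) :
    (cfQ α k : ℝ) * α - cfP α k = (-1) ^ k * cfDelta α (k + 1) := by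
  induction k using Nat.twoStepInduction with
  | zero => simp [cfQ, cfP, cfDelta_one]
  | one =>
    have h := cfDelta_eq_cfA_mul_add hα hirr 0
    rw [cfDelta_zero, cfDelta_one] at h
    simp only [cfQ, cfP]
    push_cast
    linarith
  | more k ih₀ ih₁ =>
    simp only [cfQ, cfP]
    push_cast
    linear_combination (cfA α (k + 2) : ℝ) * ih₁ + ih₀ +
      (-1) ^ k * cfDelta_eq_cfA_mul_add hα hirr (k + 1)

end ContinuedFraction

section Ostrowski

variable {α : ℝ}

/-- `(-1)^j Σ_{i<d} b_{j+i} (q_{j+i} α - p_{j+i})`, rewritten with `cfQ_mul_sub_cfP`. -/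
noncomputable def ostrowskiTail (α : ℝ) (b : ℕ → ℕ) (j d : ℕ) : ℝ :=
  ∑ i ∈ Finset.range d, (-1) ^ i * b (j + i) * cfDelta α (j + i + 1)

lemma ostrowskiTail_succ (b : ℕ → ℕ) (j d : ℕ) :
    ostrowskiTail α b j (d + 1) = b j * cfDelta α (j + 1) - ostrowskiTail α b (j + 1) d := by
  rw [ostrowskiTail, Finset.sum_range_succ', sub_eq_neg_add, ostrowskiTail,
    ← Finset.sum_neg_distrib]
  congr 1
  · exact Finset.sum_congr rfl fun i _ => by rw [show j + (i + 1) = j + 1 + i by omega]; ring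
  · simp

lemma ostrowskiTail_mem_Ioo (hα : α ∈ Set.Ioo (0:ℝ) 1) (hirr : Irrational α) {b : ℕ → ℕ}
    (hb : ∀ k, b k ≤ cfA α (k + 1)) (j d : ℕ) :
    ostrowskiTail α b j d ∈ Set.Ioo (-cfDelta α (j + 1)) (cfDelta α j) := by
  induction d generalizing j with
  | zero =>
    simpa [ostrowskiTail] using ⟨cfDelta_pos hα hirr (j + 1), cfDelta_pos hα hirr j⟩
  | succ d ih =>
    obtain ⟨hlo, hhi⟩ := ih (j + 1)
    have hdigit := cast_mul_cfDelta_add_le hα hirr (hb j)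
    have hnonneg : 0 ≤ (b j : ℝ) * cfDelta α (j + 1) :=
      mul_nonneg (Nat.cast_nonneg _) (cfDelta_pos hα hirr _).le
    rw [ostrowskiTail_succ]
    constructor <;> linarith

lemma exists_ostrowski_error (hα : α ∈ Set.Ioo (0:ℝ) 1) (hirr : Irrational α) {n : ℕ}
    {b : ℕ → ℕ} (hb : OstrowskiRep α n b) (hn : 1 ≤ n) :
    ∃ (k₀ : ℕ) (P : ℤ), b k₀ ≠ 0 ∧ 0 < (-1) ^ k₀ * ((n:ℝ) * α - P) ∧
      |(n:ℝ) * α - P| < cfDelta α k₀ ∧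
      |(n:ℝ) * α - P| < b k₀ * cfDelta α (k₀ + 1) + cfDelta α (k₀ + 2) := by
  obtain ⟨hb₀, hdig, -, N, hzero, hsum⟩ := hb
  have hdig' : ∀ k, b k ≤ cfA α (k + 1) := by
    rintro (_ | k)
    · exact hb₀.trans (Nat.sub_le _ _)
    · exact hdig _ k.succ_pos
  have hex : ∃ k, b k ≠ 0 := by
    by_contra! h
    simp [h] at hsum
    omega
  set k₀ := Nat.find hex
  have hk₀ : b k₀ ≠ 0 := Nat.find_spec hex
  have hk₀N : k₀ ≤ N := by
    by_contra! h
    exact hk₀ (hzero _ h)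
  obtain ⟨d, hd⟩ : ∃ d, N + 1 - k₀ = d + 1 := ⟨N - k₀, by omega⟩
  have hn' : n = ∑ i ∈ Finset.range (d + 1), b (k₀ + i) * cfQ α (k₀ + i) := by
    rw [hsum, ← Finset.sum_range_add_sum_Ico _ (by omega : k₀ ≤ N + 1),
      Finset.sum_Ico_eq_sum_range, hd, Finset.sum_eq_zero, zero_add]
    intro k hk
    rw [not_not.mp (Nat.find_min hex (Finset.mem_range.mp hk)), zero_mul]
  set P : ℤ := ∑ i ∈ Finset.range (d + 1), (b (k₀ + i) * cfP α (k₀ + i) : ℕ) with hP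
  have herr : (-1) ^ k₀ * ((n:ℝ) * α - P) = ostrowskiTail α b k₀ (d + 1) := by
    rw [hn', hP, ostrowskiTail]
    push_cast
    rw [Finset.sum_mul, ← Finset.sum_sub_distrib, Finset.mul_sum]
    refine Finset.sum_congr rfl fun i _ => ?_
    have hθ := cfQ_mul_sub_cfP hα hirr (k₀ + i)
    have hsq : ((-1:ℝ) ^ k₀) * (-1) ^ k₀ = 1 := by rw [← mul_pow]; norm_num
    rw [pow_add] at hθ
    linear_combination (-1) ^ k₀ * (b (k₀ + i) : ℝ) * hθ +
      (-1) ^ i * (b (k₀ + i) : ℝ) * cfDelta α (k₀ + i + 1) * hsq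
  obtain ⟨hlo, hlt⟩ := ostrowskiTail_mem_Ioo hα hirr hdig' (k₀ + 1) d
  obtain ⟨-, hhi⟩ := ostrowskiTail_mem_Ioo hα hirr hdig' k₀ (d + 1)
  have hb₁ : (1:ℝ) ≤ b k₀ := by exact_mod_cast Nat.one_le_iff_ne_zero.mpr hk₀
  have hpos : 0 < ostrowskiTail α b k₀ (d + 1) := by
    rw [ostrowskiTail_succ]
    nlinarith [cfDelta_pos hα hirr (k₀ + 1)]
  have habs : |(n:ℝ) * α - P| = ostrowskiTail α b k₀ (d + 1) := by
    rw [← abs_of_pos hpos, ← herr, abs_mul, abs_pow, abs_neg, abs_one, one_pow, one_mul]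
  refine ⟨k₀, P, hk₀, herr ▸ hpos, habs ▸ hhi, ?_⟩
  rw [habs, ostrowskiTail_succ]
  linarith

end Ostrowski

section BestApproximation

variable {α : ℝ}

lemma exists_int_coords (l : ℕ) (m p : ℤ) : ∃ x y : ℤ,
    m = x * cfQ α l + y * cfQ α (l + 1) ∧ p = x * cfP α l + y * cfP α (l + 1) := by
  have hdet := cfP_mul_cfQ_sub (α := α) l
  have hsq : ((-1:ℤ) ^ l) * (-1) ^ l = 1 := by rw [← mul_pow]; norm_num
  refine ⟨(-1) ^ l * (m * cfP α (l + 1) - p * cfQ α (l + 1)),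
    (-1) ^ l * (p * cfQ α l - m * cfP α l), ?_, ?_⟩
  · linear_combination (-((-1:ℤ) ^ l * m)) * hdet - m * hsq
  · linear_combination (-((-1:ℤ) ^ l * p)) * hdet - p * hsq

lemma coords_of_abs_lt {D₁ D₂ : ℝ} {Q₁ Q₂ x y : ℤ} {c : ℕ} (hc : 1 ≤ c) (hD₁ : 0 < D₁)
    (hD₂ : 0 < D₂) (hQ₁ : 0 < Q₁) (hQ₂ : 0 < Q₂) (hm₁ : 1 ≤ x * Q₁ + y * Q₂)
    (hm₂ : x * Q₁ + y * Q₂ < Q₁ + c * Q₂) (h : |x * D₁ - y * D₂| < D₁ - (c - 1) * D₂) :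
    x = 0 ∧ 1 ≤ y := by
  have hcR : (1:ℝ) ≤ c := by exact_mod_cast hc
  obtain ⟨h₁, h₂⟩ := abs_lt.mp h
  have hx : x = 0 := by
    rcases lt_trichotomy x 0 with hx | hx | hx
    · have hy : 1 ≤ y := by
        by_contra! hy
        nlinarith
      have hxR : (x:ℝ) ≤ -1 := by exact_mod_cast (by omega : x ≤ -1)
      have hyR : (1:ℝ) ≤ y := by exact_mod_cast hy
      nlinarith
    · exact hx
    · have hxR : (1:ℝ) ≤ x := by exact_mod_cast hx
      rcases le_or_gt y 0 with hy | hy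
      · have hyR : (y:ℝ) ≤ 0 := by exact_mod_cast hy
        nlinarith
      · have hyc : y ≤ c - 1 := by
          by_contra! hyc
          nlinarith
        have hycR : (y:ℝ) ≤ c - 1 := by exact_mod_cast hyc
        nlinarith
  subst hx
  exact ⟨rfl, by nlinarith⟩

/-- Write `(m, p)` in the basis `(q_l, p_l), (q_{l+1}, p_{l+1})` of `ℤ²`: the bounds on `m` and on
`|m α - p|` force the first coordinate to vanish. -/
lemma exists_eq_mul_cfDelta_of_abs_lt (hα : α ∈ Set.Ioo (0:ℝ) 1) (hirr : Irrational α)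
    {l c m : ℕ} {p : ℤ} (hc : 1 ≤ c) (hm₁ : 1 ≤ m) (hm₂ : m < cfQ α l + c * cfQ α (l + 1))
    (h : |(m:ℝ) * α - p| < cfDelta α (l + 1) - (c - 1) * cfDelta α (l + 2)) :
    ∃ y : ℤ, 1 ≤ y ∧ (m:ℝ) * α - p = y * ((-1) ^ (l + 1) * cfDelta α (l + 2)) := by
  obtain ⟨x, y, hm, hp⟩ := exists_int_coords (α := α) l m p
  have hval : (m:ℝ) * α - p = (-1) ^ l * (x * cfDelta α (l + 1) - y * cfDelta α (l + 2)) := by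
    have hmR : (m:ℝ) = x * cfQ α l + y * cfQ α (l + 1) := by exact_mod_cast hm
    have hpR : (p:ℝ) = x * cfP α l + y * cfP α (l + 1) := by exact_mod_cast hp
    rw [hmR, hpR]
    linear_combination (x:ℝ) * cfQ_mul_sub_cfP hα hirr l + y * cfQ_mul_sub_cfP hα hirr (l + 1)
  rw [hval, abs_mul, abs_pow, abs_neg, abs_one, one_pow, one_mul] at h
  obtain ⟨rfl, hy⟩ := coords_of_abs_lt hc (cfDelta_pos hα hirr _) (cfDelta_pos hα hirr _)
    (Int.natCast_pos.mpr (cfQ_pos hα hirr l)) (Int.natCast_pos.mpr (cfQ_pos hα hirr (l + 1)))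
    (by rw [← hm]; exact_mod_cast hm₁) (by rw [← hm]; exact_mod_cast hm₂) h
  exact ⟨y, hy, by rw [hval]; push_cast; ring⟩

/-- `m α - p` is a positive multiple of `q_{l+1} α - p_{l+1}`: for `k₀ = l + 1` this has the sign
of `T`, and for `k₀ > l + 1` it is larger than `|T|`. -/
lemma mul_pos_of_abs_le (hα : α ∈ Set.Ioo (0:ℝ) 1) (hirr : Irrational α) {l c k₀ m : ℕ}
    {T : ℝ} {p : ℤ} (hc : 1 ≤ c) (hk₀ : l + 1 ≤ k₀) (hT : 0 < (-1) ^ k₀ * T)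
    (hTk₀ : |T| < cfDelta α k₀) (hTc : |T| < cfDelta α (l + 1) - (c - 1) * cfDelta α (l + 2))
    (hm₁ : 1 ≤ m) (hm₂ : m < cfQ α l + c * cfQ α (l + 1)) (hmp : |(m:ℝ) * α - p| ≤ |T|) :
    0 < T * ((m:ℝ) * α - p) := by
  obtain ⟨y, hy, hη⟩ := exists_eq_mul_cfDelta_of_abs_lt hα hirr hc hm₁ hm₂ (hmp.trans_lt hTc)
  have hyR : (0:ℝ) < y := by exact_mod_cast hy
  have hD := cfDelta_pos hα hirr (l + 2)
  rcases hk₀.eq_or_lt with rfl | hlt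
  · rw [hη, show T * (y * ((-1) ^ (l + 1) * cfDelta α (l + 2)))
      = y * cfDelta α (l + 2) * ((-1) ^ (l + 1) * T) by ring]
    positivity
  · have habs : |(m:ℝ) * α - p| = y * cfDelta α (l + 2) := by
      rw [hη, abs_mul, abs_mul, abs_pow, abs_neg, abs_one, one_pow, one_mul, abs_of_pos hD,
        abs_of_pos hyR]
    have hk₀D : cfDelta α k₀ ≤ cfDelta α (l + 2) := (cfDelta_strictAnti hα hirr).antitone hlt
    have hyD : cfDelta α (l + 2) ≤ y * cfDelta α (l + 2) :=
      le_mul_of_one_le_left hD.le (by exact_mod_cast hy)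
    linarith

end BestApproximation

lemma exists_int_of_fract_add_lt {u v : ℝ} (h : Int.fract (u + v) < u) :
    ∃ p : ℤ, -u ≤ v - p ∧ v - p < 0 := by
  have h₀ := Int.fract_nonneg (u + v)
  rw [Int.fract] at h h₀
  exact ⟨⌊u + v⌋, by linarith, by linarith⟩

lemma pos_of_fract_lt_half {s : ℝ} (hs : |s| ≤ 1 / 2) (hs₀ : s ≠ 0) (h : Int.fract s < 1 / 2) :
    0 < s := by
  obtain ⟨hs₁, -⟩ := abs_le.mp hs
  by_contra! hneg
  have hfract : Int.fract s = s + 1 :=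
    Int.fract_eq_iff.mpr ⟨by linarith, by linarith [hneg.lt_of_ne hs₀], -1, by push_cast; ring⟩
  linarith

lemma fract_mul_le_fract_mul_add {ε : ℤ} (hε : ε = 1 ∨ ε = -1) {T v : ℝ} (hT : 0 < ε * T)
    (hT₁ : ε * T < 1) (hv : ∀ p : ℤ, |v - p| ≤ |T| → 0 < T * (v - p)) :
    Int.fract (ε * T) ≤ Int.fract (ε * (T + v)) := by
  have hεε : (ε:ℝ) * ε = 1 := by rcases hε with rfl | rfl <;> norm_num
  have hε₁ : |(ε:ℝ)| = 1 := by rcases hε with rfl | rfl <;> simp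
  have habs : |T| = ε * T := by rw [← abs_of_pos hT, abs_mul, hε₁, one_mul]
  rw [Int.fract_eq_self.mpr ⟨hT.le, hT₁⟩]
  by_contra! hlt
  obtain ⟨p, hp₁, hp₂⟩ := exists_int_of_fract_add_lt (v := ε * v) (by rwa [← mul_add])
  have hεp : v - (ε * p : ℤ) = ε * (ε * v - p) := by push_cast; linear_combination (-v) * hεε
  have hclose : |v - (ε * p : ℤ)| ≤ |T| := by
    rw [hεp, abs_mul, hε₁, one_mul, habs, abs_le]
    constructor <;> linarith
  have := hv _ hclose
  rw [hεp, show T * (ε * (ε * v - p)) = ε * T * (ε * v - p) by ring] at this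
  nlinarith

lemma fract_le_fract_of_ostrowski_error {α : ℝ} (hα : α ∈ Set.Ioo (0:ℝ) 1)
    (hirr : Irrational α) {l c k₀ n x : ℕ} {P : ℤ} (hc : 1 ≤ c) (hk₀ : l + 1 ≤ k₀)
    (hT : 0 < (-1) ^ k₀ * ((n:ℝ) * α - P)) (hTk₀ : |(n:ℝ) * α - P| < cfDelta α k₀)
    (hTc : |(n:ℝ) * α - P| < cfDelta α (l + 1) - (c - 1) * cfDelta α (l + 2))
    (hThalf : |(n:ℝ) * α - P| ≤ 1 / 2) {f : ℝ → ℝ}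
    (hf : f = (fun ξ => Int.fract ξ) ∨ f = (fun ξ => Int.fract (-ξ)))
    (hfn : f (n * α) < 1 / 2) (hx₁ : n ≤ x) (hx₂ : x < n + cfQ α l + c * cfQ α (l + 1)) :
    f (n * α) ≤ f (x * α) := by
  obtain ⟨ε, hε, rfl⟩ : ∃ ε : ℤ, (ε = 1 ∨ ε = -1) ∧ f = fun ξ : ℝ => Int.fract (ε * ξ) := by
    rcases hf with rfl | rfl
    · exact ⟨1, Or.inl rfl, by simp⟩
    · exact ⟨-1, Or.inr rfl, by simp⟩
  set T := (n:ℝ) * α - P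
  have hshift (y : ℝ) : Int.fract (ε * (y + P)) = Int.fract (ε * y) := by
    rw [mul_add, ← Int.cast_mul, Int.fract_add_intCast]
  have hε₁ : |(ε:ℝ)| = 1 := by rcases hε with rfl | rfl <;> simp
  have hεT : |(ε:ℝ) * T| ≤ 1 / 2 := by rwa [abs_mul, hε₁, one_mul]
  have hT₀ : (ε:ℝ) * T ≠ 0 := by
    refine mul_ne_zero (by rcases hε with rfl | rfl <;> norm_num) fun h => ?_
    simp [h] at hT
  have hn : (n:ℝ) * α = T + P := by ring
  have hpos : 0 < (ε:ℝ) * T :=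
    pos_of_fract_lt_half hεT hT₀ (by simpa only [hn, hshift] using hfn)
  obtain ⟨m, rfl⟩ : ∃ m, x = n + m := ⟨x - n, by omega⟩
  have hx : ((n + m : ℕ) : ℝ) * α = T + m * α + P := by push_cast; ring
  simp only [hn, hx, hshift]
  rcases Nat.eq_zero_or_pos m with rfl | hm
  · simp
  refine fract_mul_le_fract_mul_add hε hpos (by linarith [le_abs_self ((ε:ℝ) * T)])
    fun p hp => ?_
  exact mul_pos_of_abs_le hα hirr hc hk₀ hT hTk₀ hTc hm (by omega) hp

lemma lt_cfDelta_sub_cfDelta {α : ℝ} (hα : α ∈ Set.Ioo (0:ℝ) 1) (hirr : Irrational α)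
    {l k₀ : ℕ} {b : ℕ → ℕ} {t : ℝ} (hk₀ : l + 1 ≤ k₀) (ha : 2 ≤ cfA α (l + 2))
    (hb : b (l + 1) ≤ cfA α (l + 2) - 1) (htk₀ : t < cfDelta α k₀)
    (ht : t < b k₀ * cfDelta α (k₀ + 1) + cfDelta α (k₀ + 2)) :
    t < cfDelta α (l + 1) - cfDelta α (l + 2) := by
  have hrec := cfDelta_eq_cfA_mul_add hα hirr (l + 1)
  have hD := cfDelta_pos hα hirr (l + 2)
  rcases hk₀.eq_or_lt with rfl | hlt
  · have hbR : (b (l + 1) : ℝ) + 1 ≤ cfA α (l + 2) := by exact_mod_cast (by omega)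
    nlinarith
  · have haR : (2:ℝ) ≤ cfA α (l + 2) := by exact_mod_cast ha
    have hk₀D : cfDelta α k₀ ≤ cfDelta α (l + 2) := (cfDelta_strictAnti hα hirr).antitone hlt
    nlinarith [cfDelta_pos hα hirr (l + 3)]

theorem stmt17 (α : ℝ) (hα : α ∈ Set.Ioo (0:ℝ) 1) (hirr : Irrational α)
    (n : ℕ) (hn : 1 ≤ n) (b : ℕ → ℕ) (hb : OstrowskiRep α n b)
    (L : ℕ) (hL0 : ∀ k, k < L → b k = 0)
    (hLlow : 2 ≤ L ∨ (α < 1 / 2 ∧ 1 ≤ L))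
    (f : ℝ → ℝ) (hf : f = (fun ξ => Int.fract ξ) ∨ f = (fun ξ => Int.fract (-ξ)))
    (hfn : f ((n : ℝ) * α) < 1 / 2) :
    (∀ x : ℕ, n ≤ x → x < n + cfQ α (L - 1) + cfQ α L →
        f ((n : ℝ) * α) ≤ f ((x : ℝ) * α)) ∧
      (b L ≤ cfA α (L + 1) - 1 →
        ∀ x : ℕ, n ≤ x → x < n + cfQ α (L - 1) + 2 * cfQ α L →
          f ((n : ℝ) * α) ≤ f ((x : ℝ) * α)) := by
  obtain ⟨l, rfl⟩ : ∃ l, L = l + 1 := ⟨L - 1, by omega⟩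
  have hanti := (cfDelta_strictAnti hα hirr).antitone
  have hhalf : cfDelta α (l + 1) ≤ 1 / 2 := by
    rcases hLlow with hL | ⟨hα₂, -⟩
    · exact (hanti (by omega : 2 ≤ l + 1)).trans (cfDelta_two_lt_half hα hirr).le
    · exact (hanti (by omega : 1 ≤ l + 1)).trans (by rw [cfDelta_one]; linarith)
  obtain ⟨k₀, P, hk₀b, hT, hTk₀, hTb⟩ := exists_ostrowski_error hα hirr hb hn
  have hk₀ : l + 1 ≤ k₀ := by
    by_contra! h
    exact hk₀b (hL0 k₀ h)
  have hThalf := hTk₀.le.trans ((hanti hk₀).trans hhalf)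
  simp only [Nat.add_sub_cancel]
  refine ⟨fun x hx₁ hx₂ => ?_, fun hbL x hx₁ hx₂ => ?_⟩
  · exact fract_le_fract_of_ostrowski_error hα hirr le_rfl hk₀ hT hTk₀
      (by simpa using hTk₀.trans_le (hanti hk₀)) hThalf hf hfn hx₁ (by omega)
  rcases (one_le_cfA_succ hα hirr (l + 1) : 1 ≤ cfA α (l + 2)).eq_or_lt with ha | ha
  · -- `a_{l+2} = 1`: then `b_{l+1} = 0`, and the range is that of the first part one level up
    have hk₀' : l + 2 ≤ k₀ := by
      rcases hk₀.eq_or_lt with rfl | h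
      · omega
      · exact h
    have hq : cfQ α (l + 1 + 1) = cfQ α (l + 1) + cfQ α l := by
      simp only [cfQ, ← ha, one_mul]
    exact fract_le_fract_of_ostrowski_error hα hirr le_rfl hk₀' hT hTk₀
      (by simpa using hTk₀.trans_le (hanti hk₀')) hThalf hf hfn hx₁ (by omega)
  · exact fract_le_fract_of_ostrowski_error hα hirr one_le_two hk₀ hT hTk₀
      (by norm_num; exact lt_cfDelta_sub_cfDelta hα hirr hk₀ ha hbL hTk₀ hTb)
      hThalf hf hfn hx₁ (by omega)
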